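/- arXiv:1401.0700 — 2 statements merged into one kernel-verified Lean document; each statement's English description precedes it below -/
import Mathlib

section
/- Let f₁, f₂ ∈ ℂ[h] and suppose f₂(a·h + c) = a·f₁(h) + c as polynomials, for some a ∈ ℂ*, c ∈ ℂ. Then the generalized Heisenberg algebras H(f₁) and H(f₂) are isomorphic as ℂ-algebras; explicitly, there is an isomorphism σ : H(f₂) → H(f₁) with σ(x) = a·x, σ(h) = a·h + c, σ(y) = y. -/
open Polynomial

/-- Defining relations of the generalized Heisenberg algebra `H(f)`: generators
`x = ι 0`, `h = ι 1`, `y = ι 2` with `hx = x f(h)`, `yh = f(h) y`,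
`yx − xy = f(h) − h`. -/
inductive GHARel (f : Polynomial ℂ) : FreeAlgebra ℂ (Fin 3) → FreeAlgebra ℂ (Fin 3) → Prop
  | hx : GHARel f (FreeAlgebra.ι ℂ 1 * FreeAlgebra.ι ℂ 0)
      (FreeAlgebra.ι ℂ 0 * aeval (FreeAlgebra.ι ℂ 1) f)
  | yh : GHARel f (FreeAlgebra.ι ℂ 2 * FreeAlgebra.ι ℂ 1)
      (aeval (FreeAlgebra.ι ℂ 1) f * FreeAlgebra.ι ℂ 2)
  | comm : GHARel f (FreeAlgebra.ι ℂ 2 * FreeAlgebra.ι ℂ 0)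
      (FreeAlgebra.ι ℂ 0 * FreeAlgebra.ι ℂ 2 + aeval (FreeAlgebra.ι ℂ 1) f
        - FreeAlgebra.ι ℂ 1)

/-- The generalized Heisenberg algebra `H(f)`. -/
abbrev GHA (f : Polynomial ℂ) := RingQuot (GHARel f)

noncomputable def GHA.x (f : Polynomial ℂ) : GHA f :=
  RingQuot.mkAlgHom ℂ (GHARel f) (FreeAlgebra.ι ℂ 0)
noncomputable def GHA.h (f : Polynomial ℂ) : GHA f :=
  RingQuot.mkAlgHom ℂ (GHARel f) (FreeAlgebra.ι ℂ 1)
noncomputable def GHA.y (f : Polynomial ℂ) : GHA f :=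
  RingQuot.mkAlgHom ℂ (GHARel f) (FreeAlgebra.ι ℂ 2)

/-!
An assignment of `x, h, y` in a `ℂ`-algebra extends to an algebra map out of `H(f)` as soon as it
satisfies the three defining relations. Since `f₂(ah + c) = a f₁(h) + c`, the affine change
`(x, h, y) ↦ (a x, a h + c, y)` turns solutions of the `f₁`-relations into solutions of the
`f₂`-relations, giving `σ : H(f₂) → H(f₁)`. The inverse affine change `h ↦ a⁻¹ (h - c)` relates
`f₁` to `f₂` in the same way, so it gives a map back, and both composites fix the generators.
-/

theorem Polynomial.comp_affine_eq_symm {K : Type*} [Field K] {f₁ f₂ : K[X]} {a c : K} (ha : a ≠ 0)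
    (hf : f₂.comp (C a * X + C c) = C a * f₁ + C c) :
    f₁.comp (C a⁻¹ * X + C (-(a⁻¹ * c))) = C a⁻¹ * f₂ + C (-(a⁻¹ * c)) := by
  have hinv : (C a * X + C c).comp (C a⁻¹ * X + C (-(a⁻¹ * c))) = X := by
    simp only [add_comp, mul_comp, C_comp, X_comp, C_neg, C_mul]
    rw [mul_add, ← mul_assoc, ← C_mul, mul_inv_cancel₀ ha, C_1, one_mul, mul_neg,
      ← mul_assoc, ← C_mul, mul_inv_cancel₀ ha, C_1, one_mul]
    ring
  have h := congrArg (·.comp (C a⁻¹ * X + C (-(a⁻¹ * c)))) hf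
  simp only [comp_assoc, hinv, comp_X, add_comp, mul_comp, C_comp] at h
  rw [h, mul_add, ← mul_assoc, ← C_mul, inv_mul_cancel₀ ha, C_1, one_mul, C_neg, C_mul]
  ring

namespace GHA

variable {A : Type*} [Ring A] [Algebra ℂ A]

structure SatisfiesRelations (f : ℂ[X]) (x h y : A) : Prop where
  h_mul_x : h * x = x * aeval h f
  y_mul_h : y * h = aeval h f * y
  y_mul_x : y * x = x * y + aeval h f - h

theorem satisfiesRelations_generators (f : ℂ[X]) :
    SatisfiesRelations f (GHA.x f) (GHA.h f) (GHA.y f) := by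
  have hx := RingQuot.mkAlgHom_rel ℂ (GHARel.hx (f := f))
  have yh := RingQuot.mkAlgHom_rel ℂ (GHARel.yh (f := f))
  have comm := RingQuot.mkAlgHom_rel ℂ (GHARel.comm (f := f))
  simp only [map_mul, map_add, map_sub, ← aeval_algHom_apply] at hx yh comm
  exact ⟨hx, yh, comm⟩

theorem aeval_affine_of_comp_eq {f₁ f₂ : ℂ[X]} {a c : ℂ}
    (hf : f₂.comp (C a * X + C c) = C a * f₁ + C c) (h : A) :
    aeval (a • h + algebraMap ℂ A c) f₂ = a • aeval h f₁ + algebraMap ℂ A c := by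
  have hh : a • h + algebraMap ℂ A c = aeval h (C a * X + C c) := by
    simp [Algebra.smul_def]
  rw [hh, ← aeval_comp, hf]
  simp [Algebra.smul_def]

theorem SatisfiesRelations.affine {f₁ f₂ : ℂ[X]} {a c : ℂ} {x h y : A}
    (hr : SatisfiesRelations f₁ x h y) (hf : f₂.comp (C a * X + C c) = C a * f₁ + C c) :
    SatisfiesRelations f₂ (a • x) (a • h + algebraMap ℂ A c) y := by
  have key := aeval_affine_of_comp_eq hf h
  simp only [Algebra.algebraMap_eq_smul_one] at key ⊢
  constructor <;> simp only [key, add_mul, mul_add, smul_mul_assoc, mul_smul_comm, one_mul,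
    mul_one, hr.h_mul_x, hr.y_mul_h, hr.y_mul_x] <;> module

theorem rel_of_satisfiesRelations {f : ℂ[X]} {x h y : A} (hr : SatisfiesRelations f x h y)
    ⦃u v : FreeAlgebra ℂ (Fin 3)⦄ (r : GHARel f u v) :
    FreeAlgebra.lift ℂ ![x, h, y] u = FreeAlgebra.lift ℂ ![x, h, y] v := by
  obtain ⟨_, _, _⟩ := hr
  cases r <;> simp only [map_mul, map_add, map_sub, ← aeval_algHom_apply, FreeAlgebra.lift_ι_apply,
    Matrix.cons_val] <;> assumption

noncomputable def lift (f : ℂ[X]) (x h y : A) (hr : SatisfiesRelations f x h y) :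
    GHA f →ₐ[ℂ] A :=
  RingQuot.liftAlgHom ℂ ⟨FreeAlgebra.lift ℂ ![x, h, y], rel_of_satisfiesRelations hr⟩

variable {f : ℂ[X]} {x h y : A} (hr : SatisfiesRelations f x h y)

@[simp] theorem lift_x : lift f x h y hr (GHA.x f) = x := by
  simp [lift, GHA.x]

@[simp] theorem lift_h : lift f x h y hr (GHA.h f) = h := by
  simp [lift, GHA.h]

@[simp] theorem lift_y : lift f x h y hr (GHA.y f) = y := by
  simp [lift, GHA.y]

omit [Ring A] [Algebra ℂ A] in
theorem algHom_ext {B : Type*} [Semiring B] [Algebra ℂ B] {φ ψ : GHA f →ₐ[ℂ] B}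
    (hx : φ (GHA.x f) = ψ (GHA.x f)) (hh : φ (GHA.h f) = ψ (GHA.h f))
    (hy : φ (GHA.y f) = ψ (GHA.y f)) : φ = ψ := by
  refine RingQuot.ringQuot_ext' _ _ _ (FreeAlgebra.hom_ext (funext fun i => ?_))
  fin_cases i
  exacts [hx, hh, hy]

end GHA

/-- If `f₂(a·h + c) = a·f₁(h) + c` for some `a ≠ 0`, `c ∈ ℂ`, then
`H(f₁) ≅ H(f₂)` via `σ : H(f₂) → H(f₁)` with `σ(x) = a x`, `σ(h) = a h + c`,
`σ(y) = y`. -/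
theorem GHA_iso_of_affine (f₁ f₂ : Polynomial ℂ) (a c : ℂ) (ha : a ≠ 0)
    (hf : f₂.comp (C a * X + C c) = C a * f₁ + C c) :
    ∃ σ : GHA f₂ ≃ₐ[ℂ] GHA f₁,
      σ (GHA.x f₂) = a • GHA.x f₁ ∧
      σ (GHA.h f₂) = a • GHA.h f₁ + algebraMap ℂ (GHA f₁) c ∧
      σ (GHA.y f₂) = GHA.y f₁ := by
  let σ := GHA.lift f₂ _ _ _ ((GHA.satisfiesRelations_generators f₁).affine hf)
  let τ := GHA.lift f₁ _ _ _
    ((GHA.satisfiesRelations_generators f₂).affine (comp_affine_eq_symm ha hf))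
  refine ⟨AlgEquiv.ofAlgHom σ τ ?_ ?_, GHA.lift_x _, GHA.lift_h _, GHA.lift_y _⟩ <;>
    apply GHA.algHom_ext <;>
    simp [σ, τ, smul_smul, ha, Algebra.algebraMap_eq_smul_one, add_assoc, ← add_smul]
end

section
/- Let w ∈ ℂ be a primitive l-th root of unity (l ≥ 1), c ∈ ℂ, and f(h) = w·h + (1−w)·c. Then in the generalized Heisenberg algebra H(f), the elements x^l, y^l, and (h − c)^l are central. -/
open Polynomial

/-! The element `g = h - c` satisfies `g x = w x g`, `y g = w g y` and `yx - xy = (w - 1) g`.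
Hence `g` `w^l`-commutes with `x^l`, and by induction `y x^l - x^l y = (w^l - 1) x^(l-1) g`,
symmetrically for `y^l`. When `w^l = 1` all these commutators vanish, so `x^l`, `y^l`, `g^l`
commute with the generators `x`, `g`, `y` of `H(f)`. -/

def QCommute {R A : Type*} [SMul R A] [Mul A] (q : R) (a b : A) : Prop :=
  a * b = q • (b * a)

theorem QCommute.commute_of_eq_one {R A : Type*} [Monoid R] [Monoid A] [MulAction R A] {q : R}
    {a b : A} (h : QCommute q a b) (hq : q = 1) : Commute a b := by
  rw [QCommute, hq, one_smul] at h
  exact h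

namespace QCommute

variable {R A : Type*} [CommMonoid R] [Monoid A] [MulAction R A] [IsScalarTower R A A]
  [SMulCommClass R A A] {q : R} {a b : A}

theorem pow_right (h : QCommute q a b) (n : ℕ) : QCommute (q ^ n) a (b ^ n) := by
  induction n with
  | zero => simp [QCommute]
  | succ n ih =>
    unfold QCommute at *
    rw [pow_succ, ← mul_assoc, ih, smul_mul_assoc, mul_assoc, h, mul_smul_comm, smul_smul,
      ← mul_assoc, ← pow_succ, pow_succ]

theorem pow_left (h : QCommute q a b) (n : ℕ) : QCommute (q ^ n) (a ^ n) b := by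
  induction n with
  | zero => simp [QCommute]
  | succ n ih =>
    unfold QCommute at *
    rw [pow_succ', mul_assoc, ih, mul_smul_comm, ← mul_assoc, h, smul_mul_assoc, smul_smul,
      mul_assoc, ← pow_succ, pow_succ]

end QCommute

section QuantumCommutator

variable {R A : Type*} [CommRing R] [Ring A] [Module R A] [IsScalarTower R A A]
  [SMulCommClass R A A] {w : R} {x y g : A}

theorem mul_pow_succ_eq_of_qcommute (hgx : QCommute w g x)
    (hyx : y * x = x * y + (w - 1) • g) (n : ℕ) :
    y * x ^ (n + 1) = x ^ (n + 1) * y + (w ^ (n + 1) - 1) • (x ^ n * g) := by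
  induction n with
  | zero => simpa using hyx
  | succ n ih =>
    rw [pow_succ, ← mul_assoc, ih, add_mul, smul_mul_assoc, mul_assoc, hyx, mul_assoc, hgx]
    simp only [mul_add, mul_smul_comm, ← mul_assoc, ← pow_succ]
    module

theorem pow_succ_mul_eq_of_qcommute (hyg : QCommute w y g)
    (hyx : y * x = x * y + (w - 1) • g) (n : ℕ) :
    y ^ (n + 1) * x = x * y ^ (n + 1) + (w ^ (n + 1) - 1) • (g * y ^ n) := by
  induction n with
  | zero => simpa using hyx
  | succ n ih =>
    rw [pow_succ', mul_assoc, ih, mul_add, ← mul_assoc, hyx, mul_smul_comm, ← mul_assoc, hyg]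
    simp only [add_mul, smul_mul_assoc, mul_assoc, ← pow_succ']
    module

theorem commute_pow_right_of_qcommute (hgx : QCommute w g x)
    (hyx : y * x = x * y + (w - 1) • g) {n : ℕ} (hn : w ^ n = 1) : Commute y (x ^ n) := by
  cases n with
  | zero => simp
  | succ n => rw [Commute, SemiconjBy, mul_pow_succ_eq_of_qcommute hgx hyx, hn, sub_self,
      zero_smul, add_zero]

theorem commute_pow_left_of_qcommute (hyg : QCommute w y g)
    (hyx : y * x = x * y + (w - 1) • g) {n : ℕ} (hn : w ^ n = 1) : Commute (y ^ n) x := by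
  cases n with
  | zero => simp
  | succ n => rw [Commute, SemiconjBy, pow_succ_mul_eq_of_qcommute hyg hyx, hn, sub_self,
      zero_smul, add_zero]

end QuantumCommutator

theorem aeval_C_mul_X_add_C_sub_algebraMap {R A : Type*} [CommRing R] [Ring A] [Algebra R A]
    (w c : R) (a : A) :
    aeval a (C w * X + C ((1 - w) * c)) - algebraMap R A c = w • (a - algebraMap R A c) := by
  simp only [map_add, map_mul, aeval_C, aeval_X, map_sub, map_one, Algebra.smul_def]
  noncomm_ring

namespace GHA

variable {f : ℂ[X]}

theorem h_mul_x : h f * x f = x f * aeval (h f) f := by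
  simpa [h, x, ← aeval_algHom_apply] using RingQuot.mkAlgHom_rel ℂ (GHARel.hx (f := f))

theorem y_mul_h : y f * h f = aeval (h f) f * y f := by
  simpa [h, y, ← aeval_algHom_apply] using RingQuot.mkAlgHom_rel ℂ (GHARel.yh (f := f))

theorem y_mul_x : y f * x f = x f * y f + aeval (h f) f - h f := by
  simpa [h, x, y, ← aeval_algHom_apply] using RingQuot.mkAlgHom_rel ℂ (GHARel.comm (f := f))

theorem commute_of_commute_x_sub_y {z : GHA f} (c : ℂ) (hx : Commute (x f) z)
    (hg : Commute (h f - algebraMap ℂ (GHA f) c) z) (hy : Commute (y f) z) (u : GHA f) :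
    Commute u z := by
  have hh : Commute (h f) z := by
    simpa using hg.add_left (Algebra.commutes c z)
  obtain ⟨a, rfl⟩ := RingQuot.mkAlgHom_surjective ℂ (GHARel f) u
  induction a using FreeAlgebra.induction with
  | grade0 r => simpa using Algebra.commute_algebraMap_left r z
  | grade1 i => fin_cases i <;> assumption
  | mul a b ha hb => simpa using ha.mul_left hb
  | add a b ha hb => simpa using ha.add_left hb

variable {w c : ℂ}

theorem qcommute_sub_x
    (hf : aeval (h f) f - algebraMap ℂ (GHA f) c = w • (h f - algebraMap ℂ (GHA f) c)) :
    QCommute w (h f - algebraMap ℂ (GHA f) c) (x f) := by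
  rw [QCommute, sub_mul, h_mul_x, Algebra.commutes c (x f), ← mul_sub, hf, mul_smul_comm]

theorem qcommute_y_sub
    (hf : aeval (h f) f - algebraMap ℂ (GHA f) c = w • (h f - algebraMap ℂ (GHA f) c)) :
    QCommute w (y f) (h f - algebraMap ℂ (GHA f) c) := by
  rw [QCommute, mul_sub, y_mul_h, ← Algebra.commutes c (y f), ← sub_mul, hf, smul_mul_assoc]

theorem y_mul_x_eq_add_smul_sub
    (hf : aeval (h f) f - algebraMap ℂ (GHA f) c = w • (h f - algebraMap ℂ (GHA f) c)) :
    y f * x f = x f * y f + (w - 1) • (h f - algebraMap ℂ (GHA f) c) := by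
  rw [y_mul_x]
  linear_combination (norm := module) hf

end GHA

theorem GHA_central_powers_general (l : ℕ) (w : ℂ) (hw : IsPrimitiveRoot w l)
    (c : ℂ) :
    letI f : Polynomial ℂ := C w * X + C ((1 - w) * c)
    ∀ u : GHA f,
      u * GHA.x f ^ l = GHA.x f ^ l * u ∧
      u * GHA.y f ^ l = GHA.y f ^ l * u ∧
      u * (GHA.h f - algebraMap ℂ (GHA f) c) ^ l
        = (GHA.h f - algebraMap ℂ (GHA f) c) ^ l * u := by
  intro u
  have hf := aeval_C_mul_X_add_C_sub_algebraMap w c (GHA.h (C w * X + C ((1 - w) * c)))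
  have hgx := GHA.qcommute_sub_x hf
  have hyg := GHA.qcommute_y_sub hf
  have hyx := GHA.y_mul_x_eq_add_smul_sub hf
  have hwl : w ^ l = 1 := hw.pow_eq_one
  refine ⟨GHA.commute_of_commute_x_sub_y c ?_ ?_ ?_ u,
    GHA.commute_of_commute_x_sub_y c ?_ ?_ ?_ u, GHA.commute_of_commute_x_sub_y c ?_ ?_ ?_ u⟩
  · exact Commute.self_pow _ l
  · exact (hgx.pow_right l).commute_of_eq_one hwl
  · exact commute_pow_right_of_qcommute hgx hyx hwl
  · exact (commute_pow_left_of_qcommute hyg hyx hwl).symm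
  · exact ((hyg.pow_left l).commute_of_eq_one hwl).symm
  · exact Commute.self_pow _ l
  · exact ((hgx.pow_left l).commute_of_eq_one hwl).symm
  · exact Commute.self_pow _ l
  · exact (hyg.pow_right l).commute_of_eq_one hwl

/-- If `w` is a primitive `l`-th root of unity (`l ≥ 1`) and
`f(h) = w·h + (1−w)·c`, then `x^l`, `y^l` and `(h − c)^l` are central in `H(f)`. -/
theorem GHA_central_powers (l : ℕ) (hl : 1 ≤ l) (w : ℂ) (hw : IsPrimitiveRoot w l)
    (c : ℂ) :
    letI f : Polynomial ℂ := C w * X + C ((1 - w) * c)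
    ∀ u : GHA f,
      u * GHA.x f ^ l = GHA.x f ^ l * u ∧
      u * GHA.y f ^ l = GHA.y f ^ l * u ∧
      u * (GHA.h f - algebraMap ℂ (GHA f) c) ^ l
        = (GHA.h f - algebraMap ℂ (GHA f) c) ^ l * u :=
  GHA_central_powers_general l w hw c
end
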